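/- arXiv:1401.3687 — 2 statements merged into one kernel-verified Lean document; each statement's English description precedes it below -/
import Mathlib

section
/- In the Toy Positive CNF game on a positive CNF formula, the True player never benefits from assigning a variable false: if True has a winning strategy in which some move assigns a variable false, then True also has a winning strategy in which every one of True's moves assigns its variable true. Formally: for any game position (a partial assignment with True to move), if True can win, then True can win using only true-assignments on True's own turns. -/
/-- Evaluation of a positive CNF formula (a list of clauses, each a list of
unnegated variables): every clause must contain a variable assigned `true`. -/
def pcEval {V : Type} (F : List (List V)) (σ : V → Bool) : Bool :=
  F.all fun c => c.any σ

/-- Update a partial assignment at one variable. -/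
def upd {V : Type} [DecidableEq V] (ρ : V → Option Bool) (x : V) (b : Bool) :
    V → Option Bool :=
  fun y => if y = x then some b else ρ y

/-- Toy Positive CNF: the True player wins from the position `(ρ, turn)` (with
`turn = true` meaning True to move), where the fuel counts the remaining
unassigned variables; each player may assign either Boolean value. -/
def ToyWin {V : Type} [DecidableEq V] (F : List (List V)) :
    ℕ → (V → Option Bool) → Bool → Prop
  | 0, ρ, _ => pcEval F (fun x => (ρ x).getD false) = true
  | n + 1, ρ, true => ∃ x, ρ x = none ∧ ∃ b, ToyWin F n (upd ρ x b) false
  | n + 1, ρ, false => ∀ x, ρ x = none → ∀ b, ToyWin F n (upd ρ x b) true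

/-- The variant of Toy Positive CNF in which the True player only ever assigns
the value `true` (the False player is unrestricted). -/
def ToyWinT {V : Type} [DecidableEq V] (F : List (List V)) :
    ℕ → (V → Option Bool) → Bool → Prop
  | 0, ρ, _ => pcEval F (fun x => (ρ x).getD false) = true
  | n + 1, ρ, true => ∃ x, ρ x = none ∧ ToyWinT F n (upd ρ x true) false
  | n + 1, ρ, false => ∀ x, ρ x = none → ∀ b, ToyWinT F n (upd ρ x b) true

lemma toy_mono {V : Type} [DecidableEq V] (F : List (List V)) :
    ∀ (n : ℕ) (ρ ρ' : V → Option Bool) (t : Bool),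
      (∀ x, ρ x = none ↔ ρ' x = none) →
      (∀ x, (ρ x).getD false = true → (ρ' x).getD false = true) →
      ToyWin F n ρ t → ToyWin F n ρ' t := by
  intro n
  induction n with
  | zero =>
    intro ρ ρ' t hnone hle h
    simp only [ToyWin, pcEval, List.all_eq_true, List.any_eq_true] at h ⊢
    intro c hc
    obtain ⟨v, hv, hv'⟩ := h c hc
    exact ⟨v, hv, hle v hv'⟩
  | succ n ih =>
    intro ρ ρ' t hnone hle h
    have hupd : ∀ (x : V) (b : Bool),
        (∀ y, upd ρ x b y = none ↔ upd ρ' x b y = none) ∧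
        (∀ y, (upd ρ x b y).getD false = true → (upd ρ' x b y).getD false = true) := by
      intro x b
      constructor <;> intro y <;> simp only [upd] <;> split
      · rfl
      · exact hnone y
      · exact fun h => h
      · exact hle y
    cases t with
    | true =>
      obtain ⟨x, hx, b, hw⟩ := h
      exact ⟨x, (hnone x).mp hx, b, ih _ _ _ (hupd x b).1 (hupd x b).2 hw⟩
    | false =>
      intro x hx b
      exact ih _ _ _ (hupd x b).1 (hupd x b).2 (h x ((hnone x).mpr hx) b)

lemma toy_key {V : Type} [DecidableEq V] (F : List (List V)) :
    ∀ (n : ℕ) (ρ : V → Option Bool) (t : Bool),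
      ToyWin F n ρ t → ToyWinT F n ρ t := by
  intro n
  induction n with
  | zero => intro ρ t h; exact h
  | succ n ih =>
    intro ρ t h
    cases t with
    | true =>
      obtain ⟨x, hx, b, hw⟩ := h
      refine ⟨x, hx, ih _ _ ?_⟩
      refine toy_mono F n (upd ρ x b) (upd ρ x true) false ?_ ?_ hw
      · intro y; simp only [upd]; split <;> simp
      · intro y; simp only [upd]; split
        · simp
        · exact fun h => h
    | false =>
      intro x hx b
      exact ih _ _ (h x hx b)

theorem toy_true_never_plays_false {V : Type} [Fintype V] [DecidableEq V]
    (F : List (List V)) (ρ : V → Option Bool) (n : ℕ)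
    (hn : n = (Finset.univ.filter fun x => ρ x = none).card)
    (h : ToyWin F n ρ true) : ToyWinT F n ρ true :=
  toy_key F n ρ true h
end

section
/- Symmetrically, in the Toy Positive CNF game the False player never benefits from assigning a variable true: if False has a winning strategy from a position, then False has a winning strategy in which every one of False's moves assigns its chosen variable false. Consequently, True wins a Toy Positive CNF position if and only if True wins the corresponding Positive CNF position (where each player is forced to assign their own identity value). -/
/-- The variant of Toy Positive CNF in which the False player only ever assigns
the value `false` (the True player is unrestricted). -/
def ToyWinF {V : Type} [DecidableEq V] (F : List (List V)) :
    ℕ → (V → Option Bool) → Bool → Prop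
  | 0, ρ, _ => pcEval F (fun x => (ρ x).getD false) = true
  | n + 1, ρ, true => ∃ x, ρ x = none ∧ ∃ b, ToyWinF F n (upd ρ x b) false
  | n + 1, ρ, false => ∀ x, ρ x = none → ToyWinF F n (upd ρ x false) true

/-- The Positive CNF game: True must assign `true` and False must assign `false`. -/
def PosWin {V : Type} [DecidableEq V] (F : List (List V)) :
    ℕ → (V → Option Bool) → Bool → Prop
  | 0, ρ, _ => pcEval F (fun x => (ρ x).getD false) = true
  | n + 1, ρ, true => ∃ x, ρ x = none ∧ PosWin F n (upd ρ x true) false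
  | n + 1, ρ, false => ∀ x, ρ x = none → PosWin F n (upd ρ x false) true

def AssignLe {V : Type} (ρ ρ' : V → Option Bool) : Prop :=
  ∀ x, (ρ' x = none ↔ ρ x = none) ∧ ((ρ x).getD false = true → (ρ' x).getD false = true)

lemma assignLe_refl {V : Type} (ρ : V → Option Bool) : AssignLe ρ ρ :=
  fun _ => ⟨Iff.rfl, id⟩

lemma assignLe_upd {V : Type} [DecidableEq V] {ρ ρ' : V → Option Bool} (h : AssignLe ρ ρ')
    (x : V) {b b' : Bool} (hb : b = true → b' = true) :
    AssignLe (upd ρ x b) (upd ρ' x b') := by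
  intro y
  unfold upd
  by_cases hy : y = x <;> simp [hy]
  · exact hb
  · exact h y

lemma pcEval_mono {V : Type} (F : List (List V)) {σ σ' : V → Bool}
    (h : ∀ x, σ x = true → σ' x = true) (he : pcEval F σ = true) : pcEval F σ' = true := by
  unfold pcEval at *
  simp only [List.all_eq_true] at *
  intro c hc
  have := he c hc
  simp only [List.any_eq_true] at *
  obtain ⟨v, hv, hsv⟩ := this
  exact ⟨v, hv, h v hsv⟩

lemma main_mono {V : Type} [DecidableEq V] (F : List (List V)) :
    ∀ n (ρ ρ' : V → Option Bool), AssignLe ρ ρ' → ∀ t,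
      (ToyWinF F n ρ t → ToyWin F n ρ' t) ∧
      (ToyWin F n ρ t → PosWin F n ρ' t) ∧
      (PosWin F n ρ t → ToyWin F n ρ' t) ∧
      (ToyWin F n ρ t → ToyWinF F n ρ' t) := by
  intro n
  induction n with
  | zero =>
    intro ρ ρ' h t
    have base : pcEval F (fun x => (ρ x).getD false) = true →
        pcEval F (fun x => (ρ' x).getD false) = true :=
      pcEval_mono F (fun x => (h x).2)
    exact ⟨base, base, base, base⟩
  | succ n ih =>
    intro ρ ρ' h t
    cases t with
    | true =>
      refine ⟨?_, ?_, ?_, ?_⟩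
      · rintro ⟨x, hx, b, hw⟩
        exact ⟨x, (h x).1.mpr hx, b,
          (ih _ _ (assignLe_upd h x (fun hb => hb)) false).1 hw⟩
      · rintro ⟨x, hx, b, hw⟩
        exact ⟨x, (h x).1.mpr hx,
          (ih _ _ (assignLe_upd h x (fun _ => rfl)) false).2.1 hw⟩
      · rintro ⟨x, hx, hw⟩
        exact ⟨x, (h x).1.mpr hx, true,
          (ih _ _ (assignLe_upd h x (fun hb => hb)) false).2.2.1 hw⟩
      · rintro ⟨x, hx, b, hw⟩
        exact ⟨x, (h x).1.mpr hx, b,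
          (ih _ _ (assignLe_upd h x (fun hb => hb)) false).2.2.2 hw⟩
    | false =>
      refine ⟨?_, ?_, ?_, ?_⟩
      · intro hw x hx b
        exact (ih _ _ (assignLe_upd h x (fun hb => by simp at hb)) true).1
          (hw x ((h x).1.mp hx))
      · intro hw x hx
        exact (ih _ _ (assignLe_upd h x (fun hb => hb)) true).2.1
          (hw x ((h x).1.mp hx) false)
      · intro hw x hx b
        exact (ih _ _ (assignLe_upd h x (fun hb => by simp at hb)) true).2.2.1
          (hw x ((h x).1.mp hx))
      · intro hw x hx
        exact (ih _ _ (assignLe_upd h x (fun hb => hb)) true).2.2.2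
          (hw x ((h x).1.mp hx) false)

theorem toy_false_never_plays_true {V : Type} [Fintype V] [DecidableEq V]
    (F : List (List V)) (ρ : V → Option Bool) (n : ℕ) (t : Bool)
    (hn : n = (Finset.univ.filter fun x => ρ x = none).card) :
    (¬ ToyWin F n ρ t → ¬ ToyWinF F n ρ t) ∧
    (ToyWin F n ρ t ↔ PosWin F n ρ t) := by
  have h := main_mono F n ρ ρ (assignLe_refl ρ) t
  exact ⟨fun hnt hf => hnt (h.1 hf), ⟨h.2.1, h.2.2.1⟩⟩
end
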